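/- arXiv:1806.05638 — 2 statements merged into one kernel-verified Lean document; each statement's English description precedes it below -/
import Mathlib

section
/- Let α = u dz/z + β be a b-contact form on a 3-manifold M with critical surface Z = {z = 0}, where u ∈ C^∞(M) and β ∈ Ω¹(M). Write the Reeb vector field on Z as R = g·z ∂/∂z + X with X tangent to Z. If g·u + β(X) = 1, -g du + ι_X dβ = 0, and ι_X du = 0 hold on Z, then ι_X Θ = du on Z, where Θ = u dβ + β ∧ du; i.e., the restriction of R to Z is the Hamiltonian vector field of -u with respect to the area form Θ|_Z. -/
/-- Exterior derivative of a 1-form, evaluated on two (constant) vectors. -/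
noncomputable def dextE {E : Type*} [NormedAddCommGroup E] [NormedSpace ℝ E]
    (α : E → E →L[ℝ] ℝ) (p v w : E) : ℝ :=
  fderiv ℝ (fun q => α q w) p v - fderiv ℝ (fun q => α q v) p w

/-- Let `α = u dz/z + β` be a `b`-contact form on a 3-manifold with critical surface `Z`
(here modelled on `ℝ²`), and write the Reeb vector field along `Z` as
`R = g·z ∂/∂z + X` with `X` tangent to `Z`.  The Reeb equations on `Z` read
`g·u + β(X) = 1`, `-g du + ι_X dβ = 0` and `ι_X du = 0`.  Then `ι_X Θ = du` on `Z`,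
where `Θ = u dβ + β ∧ du`; i.e. the restriction of the Reeb field to `Z` is the
Hamiltonian vector field of `-u` with respect to the area form `Θ|_Z`. -/
theorem stmt6 (u g : (Fin 2 → ℝ) → ℝ) (β : (Fin 2 → ℝ) → (Fin 2 → ℝ) →L[ℝ] ℝ)
    (X : (Fin 2 → ℝ) → Fin 2 → ℝ)
    (hu : ContDiff ℝ (⊤ : ℕ∞) u) (hg : ContDiff ℝ (⊤ : ℕ∞) g) (hβ : ContDiff ℝ (⊤ : ℕ∞) β)
    (hX : ContDiff ℝ (⊤ : ℕ∞) X)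
    (h1 : ∀ p, g p * u p + β p (X p) = 1)
    (h2 : ∀ p v, -(g p) * fderiv ℝ u p v + dextE β p (X p) v = 0)
    (h3 : ∀ p, fderiv ℝ u p (X p) = 0) :
    ∀ p v, u p * dextE β p (X p) v +
        (β p (X p) * fderiv ℝ u p v - β p v * fderiv ℝ u p (X p)) =
      fderiv ℝ u p v := by
  intro p v
  have e2 := h2 p v
  have e1 := h1 p
  have e3 := h3 p
  have hd : dextE β p (X p) v = g p * fderiv ℝ u p v := by linarith
  rw [hd, e3]
  linear_combination fderiv ℝ u p v * e1
end

section
/- Let (M^{2n+1}, Λ, R) be a Jacobi manifold and Π = e^{-τ}(Λ + ∂/∂τ ∧ R) its Poissonization on M × ℝ. Then Π^{n+1} = -(n+1) e^{-(n+1)τ} ∂/∂τ ∧ Λ^n ∧ R (up to combinatorial constant). Consequently, if Λ^n ∧ R is transverse to the zero section of Λ^{2n+1}(TM), then Π^{n+1} is transverse to the zero section of Λ^{2n+2}(T(M×ℝ)); i.e., the Poissonization of a b-Jacobi manifold is a b-Poisson manifold. -/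
/-- The pairing `Λ(df, dg)` of a bivector field `Λ` on `ℝᵐ` (given through its
components) with the differentials of two functions. -/
noncomputable def lamBr (m : ℕ) (a : (Fin m → ℝ) → Fin m → Fin m → ℝ)
    (f g : (Fin m → ℝ) → ℝ) (p : Fin m → ℝ) : ℝ :=
  ∑ i : Fin m, ∑ j : Fin m,
    a p i j * fderiv ℝ f p (Pi.single i 1) * fderiv ℝ g p (Pi.single j 1)

/-- The derivative `R(f) = df(R)` of a function along a vector field on `ℝᵐ`. -/
noncomputable def vfD (m : ℕ) (R : (Fin m → ℝ) → Fin m → ℝ)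
    (f : (Fin m → ℝ) → ℝ) (p : Fin m → ℝ) : ℝ :=
  fderiv ℝ f p (R p)

/-- The coefficient of the top multivector field `Λⁿ ∧ R` on `ℝ^{2n+1}` with respect to
the standard (co)frame, i.e. the pairing `⟨Λⁿ ∧ R, dx⁰ ∧ ⋯ ∧ dx^{2n}⟩`. -/
noncomputable def cLam (n : ℕ) (a : (Fin (2 * n + 1) → ℝ) → Fin (2 * n + 1) → Fin (2 * n + 1) → ℝ)
    (R : (Fin (2 * n + 1) → ℝ) → Fin (2 * n + 1) → ℝ) (p : Fin (2 * n + 1) → ℝ) : ℝ :=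
  (1 / 2 ^ n : ℝ) * ∑ σ : Equiv.Perm (Fin (2 * n + 1)),
    ((Equiv.Perm.sign σ : ℤ) : ℝ) *
      (∏ i : Fin n, a p (σ ⟨2 * i.1, by have := i.isLt; omega⟩)
        (σ ⟨2 * i.1 + 1, by have := i.isLt; omega⟩)) *
      R p (σ ⟨2 * n, by omega⟩)

/-- The components of the Poissonization `Π = e^{-τ}(Λ + ∂/∂τ ∧ R)` on `ℝ^{2n+1} × ℝ`,
with the index `2n+1` corresponding to the `τ`-direction. -/
noncomputable def piComp (n : ℕ)
    (a : (Fin (2 * n + 1) → ℝ) → Fin (2 * n + 1) → Fin (2 * n + 1) → ℝ)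
    (R : (Fin (2 * n + 1) → ℝ) → Fin (2 * n + 1) → ℝ)
    (z : (Fin (2 * n + 1) → ℝ) × ℝ) (i j : Fin (2 * n + 2)) : ℝ :=
  if hi : i.1 < 2 * n + 1 then
    if hj : j.1 < 2 * n + 1 then Real.exp (-z.2) * a z.1 ⟨i.1, hi⟩ ⟨j.1, hj⟩
    else -Real.exp (-z.2) * R z.1 ⟨i.1, hi⟩
  else if hj : j.1 < 2 * n + 1 then Real.exp (-z.2) * R z.1 ⟨j.1, hj⟩ else 0

/-- The coefficient of the top multivector field `Π^{n+1}` on `ℝ^{2n+1} × ℝ` with respect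
to the standard (co)frame. -/
noncomputable def cPi (n : ℕ)
    (a : (Fin (2 * n + 1) → ℝ) → Fin (2 * n + 1) → Fin (2 * n + 1) → ℝ)
    (R : (Fin (2 * n + 1) → ℝ) → Fin (2 * n + 1) → ℝ)
    (z : (Fin (2 * n + 1) → ℝ) × ℝ) : ℝ :=
  (1 / 2 ^ (n + 1) : ℝ) * ∑ σ : Equiv.Perm (Fin (2 * n + 2)),
    ((Equiv.Perm.sign σ : ℤ) : ℝ) *
      ∏ i : Fin (n + 1), piComp n a R z (σ ⟨2 * i.1, by have := i.isLt; omega⟩)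
        (σ ⟨2 * i.1 + 1, by have := i.isLt; omega⟩)

open Equiv Finset

namespace Stmt10Aux

variable (n : ℕ)
  (a : (Fin (2 * n + 1) → ℝ) → Fin (2 * n + 1) → Fin (2 * n + 1) → ℝ)
  (R : (Fin (2 * n + 1) → ℝ) → Fin (2 * n + 1) → ℝ)

/-- De-exponentiated components of the Poissonization. -/
noncomputable def bb (x : Fin (2 * n + 1) → ℝ) (i j : Fin (2 * n + 2)) : ℝ :=
  if hi : i.1 < 2 * n + 1 then
    if hj : j.1 < 2 * n + 1 then a x ⟨i.1, hi⟩ ⟨j.1, hj⟩ else -R x ⟨i.1, hi⟩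
  else if hj : j.1 < 2 * n + 1 then R x ⟨j.1, hj⟩ else 0

def e₀ (i : Fin (n + 1)) : Fin (2 * n + 2) := ⟨2 * i.1, by have := i.isLt; omega⟩
def e₁ (i : Fin (n + 1)) : Fin (2 * n + 2) := ⟨2 * i.1 + 1, by have := i.isLt; omega⟩
def lastF : Fin (2 * n + 2) := ⟨2 * n + 1, by omega⟩

noncomputable def ff (x : Fin (2 * n + 1) → ℝ) (σ : Perm (Fin (2 * n + 2))) : ℝ :=
  ((Equiv.Perm.sign σ : ℤ) : ℝ) * ∏ i : Fin (n + 1), bb n a R x (σ (e₀ n i)) (σ (e₁ n i))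

lemma bb_anti (hanti : ∀ p i j, a p i j = -a p j i) (x : Fin (2 * n + 1) → ℝ)
    (i j : Fin (2 * n + 2)) : bb n a R x i j = -bb n a R x j i := by
  unfold bb
  split_ifs with h1 h2 h3 h4
  · exact hanti x _ _
  · rfl
  · rw [neg_neg]
  · rw [neg_zero]

end Stmt10Aux

namespace Stmt10Aux

lemma e₀_ne_e₁ (n : ℕ) (i j : Fin (n + 1)) : e₀ n i ≠ e₁ n j := by
  simp only [e₀, e₁, ne_eq, Fin.mk.injEq]; omega

lemma e₀_inj (n : ℕ) {i j : Fin (n + 1)} (h : i ≠ j) : e₀ n i ≠ e₀ n j := by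
  have := Fin.val_ne_of_ne h
  simp only [e₀, ne_eq, Fin.mk.injEq]; omega

lemma e₁_inj (n : ℕ) {i j : Fin (n + 1)} (h : i ≠ j) : e₁ n i ≠ e₁ n j := by
  have := Fin.val_ne_of_ne h
  simp only [e₁, ne_eq, Fin.mk.injEq]; omega

lemma prod_ite_neg {N : ℕ} (F : Fin N → ℝ) (k : Fin N) :
    (∏ i, if i = k then -(F i) else F i) = -∏ i, F i := by
  rw [← Finset.mul_prod_erase univ _ (mem_univ k), ← Finset.mul_prod_erase univ F (mem_univ k),
    if_pos rfl, Finset.prod_congr rfl (fun i hi => if_neg (Finset.ne_of_mem_erase hi))]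
  ring

variable {n : ℕ}
  {a : (Fin (2 * n + 1) → ℝ) → Fin (2 * n + 1) → Fin (2 * n + 1) → ℝ}
  {R : (Fin (2 * n + 1) → ℝ) → Fin (2 * n + 1) → ℝ}

lemma ff_mul_swap (hanti : ∀ p i j, a p i j = -a p j i) (x : Fin (2 * n + 1) → ℝ)
    (σ : Perm (Fin (2 * n + 2))) (k : Fin (n + 1)) :
    ff n a R x (σ * Equiv.swap (e₀ n k) (e₁ n k)) = ff n a R x σ := by
  have hne : e₀ n k ≠ e₁ n k := e₀_ne_e₁ n k k
  unfold ff
  have hsign : Equiv.Perm.sign (σ * Equiv.swap (e₀ n k) (e₁ n k)) = -Equiv.Perm.sign σ := by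
    rw [Equiv.Perm.sign_mul, Equiv.Perm.sign_swap hne, mul_neg_one]
  have key : ∀ i : Fin (n + 1),
      bb n a R x ((σ * Equiv.swap (e₀ n k) (e₁ n k)) (e₀ n i))
        ((σ * Equiv.swap (e₀ n k) (e₁ n k)) (e₁ n i)) =
      if i = k then -(bb n a R x (σ (e₀ n i)) (σ (e₁ n i)))
      else bb n a R x (σ (e₀ n i)) (σ (e₁ n i)) := by
    intro i
    rw [Perm.mul_apply, Perm.mul_apply]
    by_cases hik : i = k
    · subst hik
      rw [if_pos rfl, Equiv.swap_apply_left, Equiv.swap_apply_right, bb_anti n a R hanti]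
    · rw [if_neg hik, Equiv.swap_apply_of_ne_of_ne (e₀_inj n hik) (e₀_ne_e₁ n i k),
        Equiv.swap_apply_of_ne_of_ne (Ne.symm (e₀_ne_e₁ n k i)) (e₁_inj n hik)]
  rw [hsign, Finset.prod_congr rfl (fun i _ => key i), prod_ite_neg]
  push_cast
  ring

lemma d_apply_e₀ (k i : Fin (n + 1)) :
    Equiv.swap (e₀ n k) (e₀ n (Fin.last n)) (Equiv.swap (e₁ n k) (e₁ n (Fin.last n))
      (e₀ n i)) = e₀ n (Equiv.swap k (Fin.last n) i) := by
  rw [Equiv.swap_apply_of_ne_of_ne (e₀_ne_e₁ n i k) (e₀_ne_e₁ n i (Fin.last n))]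
  by_cases hik : i = k
  · subst hik; rw [Equiv.swap_apply_left, Equiv.swap_apply_left]
  · by_cases hil : i = Fin.last n
    · subst hil; rw [Equiv.swap_apply_right, Equiv.swap_apply_right]
    · rw [Equiv.swap_apply_of_ne_of_ne (e₀_inj n hik) (e₀_inj n hil),
        Equiv.swap_apply_of_ne_of_ne hik hil]

lemma d_apply_e₁ (k i : Fin (n + 1)) :
    Equiv.swap (e₀ n k) (e₀ n (Fin.last n)) (Equiv.swap (e₁ n k) (e₁ n (Fin.last n))
      (e₁ n i)) = e₁ n (Equiv.swap k (Fin.last n) i) := by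
  by_cases hik : i = k
  · subst hik
    rw [Equiv.swap_apply_left,
      Equiv.swap_apply_of_ne_of_ne (Ne.symm (e₀_ne_e₁ n i (Fin.last n)))
        (Ne.symm (e₀_ne_e₁ n (Fin.last n) (Fin.last n))), Equiv.swap_apply_left]
  · by_cases hil : i = Fin.last n
    · subst hil
      rw [Equiv.swap_apply_right,
        Equiv.swap_apply_of_ne_of_ne (Ne.symm (e₀_ne_e₁ n k k))
          (Ne.symm (e₀_ne_e₁ n (Fin.last n) k)), Equiv.swap_apply_right]
    · rw [Equiv.swap_apply_of_ne_of_ne (e₁_inj n hik) (e₁_inj n hil),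
        Equiv.swap_apply_of_ne_of_ne (Ne.symm (e₀_ne_e₁ n k i))
          (Ne.symm (e₀_ne_e₁ n (Fin.last n) i)),
        Equiv.swap_apply_of_ne_of_ne hik hil]

lemma ff_mul_dswap (x : Fin (2 * n + 1) → ℝ) (σ : Perm (Fin (2 * n + 2))) (k : Fin (n + 1)) :
    ff n a R x (σ * (Equiv.swap (e₀ n k) (e₀ n (Fin.last n)) *
      Equiv.swap (e₁ n k) (e₁ n (Fin.last n)))) = ff n a R x σ := by
  have hsd : Equiv.Perm.sign (Equiv.swap (e₀ n k) (e₀ n (Fin.last n)) *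
      Equiv.swap (e₁ n k) (e₁ n (Fin.last n))) = 1 := by
    by_cases hk : k = Fin.last n
    · subst hk
      simp [Equiv.swap_self, ← Equiv.Perm.one_def]
    · rw [Equiv.Perm.sign_mul, Equiv.Perm.sign_swap (e₀_inj n hk),
        Equiv.Perm.sign_swap (e₁_inj n hk)]
      norm_num
  unfold ff
  rw [Equiv.Perm.sign_mul, hsd, mul_one]
  congr 1
  have key : ∀ i : Fin (n + 1),
      bb n a R x ((σ * (Equiv.swap (e₀ n k) (e₀ n (Fin.last n)) *
          Equiv.swap (e₁ n k) (e₁ n (Fin.last n)))) (e₀ n i))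
        ((σ * (Equiv.swap (e₀ n k) (e₀ n (Fin.last n)) *
          Equiv.swap (e₁ n k) (e₁ n (Fin.last n)))) (e₁ n i)) =
      bb n a R x (σ (e₀ n (Equiv.swap k (Fin.last n) i)))
        (σ (e₁ n (Equiv.swap k (Fin.last n) i))) := by
    intro i
    simp only [Perm.mul_apply]
    rw [d_apply_e₀, d_apply_e₁]
  rw [Finset.prod_congr rfl (fun i _ => key i)]
  exact Equiv.prod_comp (Equiv.swap k (Fin.last n))
    (fun j => bb n a R x (σ (e₀ n j)) (σ (e₁ n j)))

end Stmt10Aux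

namespace Stmt10Aux

variable {n : ℕ}
  {a : (Fin (2 * n + 1) → ℝ) → Fin (2 * n + 1) → Fin (2 * n + 1) → ℝ}
  {R : (Fin (2 * n + 1) → ℝ) → Fin (2 * n + 1) → ℝ}

lemma exists_g (hanti : ∀ p i j, a p i j = -a p j i) (x : Fin (2 * n + 1) → ℝ)
    (s : Fin (2 * n + 2)) :
    ∃ g : Perm (Fin (2 * n + 2)), g (lastF n) = s ∧
      ∀ σ, ff n a R x (σ * g) = ff n a R x σ := by
  have hs := s.isLt
  set k : Fin (n + 1) := ⟨s.1 / 2, by omega⟩ with hk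
  have hdlast : (Equiv.swap (e₀ n k) (e₀ n (Fin.last n)) *
      Equiv.swap (e₁ n k) (e₁ n (Fin.last n))) (lastF n) = e₁ n k := by
    have h1 : lastF n = e₁ n (Fin.last n) := rfl
    rw [Perm.mul_apply, h1, Equiv.swap_apply_right,
      Equiv.swap_apply_of_ne_of_ne (Ne.symm (e₀_ne_e₁ n k k))
        (Ne.symm (e₀_ne_e₁ n (Fin.last n) k))]
  by_cases hpar : s.1 % 2 = 1
  · refine ⟨Equiv.swap (e₀ n k) (e₀ n (Fin.last n)) *
      Equiv.swap (e₁ n k) (e₁ n (Fin.last n)), ?_, fun σ => ff_mul_dswap x σ k⟩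
    rw [hdlast]
    simp only [e₁, hk, Fin.ext_iff]
    omega
  · refine ⟨Equiv.swap (e₀ n k) (e₁ n k) * (Equiv.swap (e₀ n k) (e₀ n (Fin.last n)) *
      Equiv.swap (e₁ n k) (e₁ n (Fin.last n))), ?_, ?_⟩
    · rw [Perm.mul_apply, hdlast, Equiv.swap_apply_right]
      simp only [e₀, hk, Fin.ext_iff]
      omega
    · intro σ
      rw [← mul_assoc, ff_mul_dswap x _ k, ff_mul_swap hanti x σ k]

end Stmt10Aux

namespace Stmt10Aux

variable {n : ℕ}
  {a : (Fin (2 * n + 1) → ℝ) → Fin (2 * n + 1) → Fin (2 * n + 1) → ℝ}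
  {R : (Fin (2 * n + 1) → ℝ) → Fin (2 * n + 1) → ℝ}

lemma sum_ff_eq (hanti : ∀ p i j, a p i j = -a p j i) (x : Fin (2 * n + 1) → ℝ) :
    ∑ σ : Perm (Fin (2 * n + 2)), ff n a R x σ =
      (2 * (n : ℝ) + 2) * ∑ σ ∈ univ.filter
        (fun σ : Perm (Fin (2 * n + 2)) => σ (lastF n) = lastF n), ff n a R x σ := by
  classical
  rw [← Finset.sum_fiberwise (univ : Finset (Perm (Fin (2 * n + 2))))
    (fun σ => σ⁻¹ (lastF n)) (ff n a R x)]
  have hfil : ∀ s : Fin (2 * n + 2),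
      (univ.filter fun σ : Perm (Fin (2 * n + 2)) => σ⁻¹ (lastF n) = s) =
        univ.filter fun σ => σ s = lastF n := by
    intro s; ext σ
    simp [Equiv.Perm.inv_def, Equiv.eq_symm_apply, eq_comm]
  have hT : ∀ s : Fin (2 * n + 2),
      ∑ σ ∈ univ.filter (fun σ : Perm (Fin (2 * n + 2)) => σ s = lastF n), ff n a R x σ =
      ∑ σ ∈ univ.filter (fun σ : Perm (Fin (2 * n + 2)) => σ (lastF n) = lastF n),
        ff n a R x σ := by
    intro s
    obtain ⟨g, hg, hinv⟩ := exists_g hanti x s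
    refine Finset.sum_nbij' (fun σ => σ * g) (fun σ => σ * g⁻¹) ?_ ?_ ?_ ?_ ?_
    · intro σ hσ
      simp only [mem_filter, mem_univ, true_and] at hσ ⊢
      rw [Perm.mul_apply, hg, hσ]
    · intro σ hσ
      simp only [mem_filter, mem_univ, true_and] at hσ ⊢
      rw [Perm.mul_apply, ← hg, Equiv.Perm.inv_def, Equiv.symm_apply_apply, hσ]
    · intro σ _; exact mul_inv_cancel_right σ g
    · intro σ _; exact inv_mul_cancel_right σ g
    · intro σ _; exact (hinv σ).symm
  rw [Finset.sum_congr rfl fun s _ => by rw [hfil s, hT s]]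
  rw [Finset.sum_const, card_univ, Fintype.card_fin, nsmul_eq_mul]
  push_cast
  ring

end Stmt10Aux

namespace Stmt10Aux

def eL (n : ℕ) : Fin (2 * n + 1) ≃ {x : Fin (2 * n + 2) // x.1 < 2 * n + 1} where
  toFun i := ⟨⟨i.1, by have := i.isLt; omega⟩, i.isLt⟩
  invFun x := ⟨x.1.1, x.2⟩
  left_inv i := rfl
  right_inv x := rfl

variable {n : ℕ}
  {a : (Fin (2 * n + 1) → ℝ) → Fin (2 * n + 1) → Fin (2 * n + 1) → ℝ}
  {R : (Fin (2 * n + 1) → ℝ) → Fin (2 * n + 1) → ℝ}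

lemma ext_apply_lt (τ : Perm (Fin (2 * n + 1))) (i : Fin (2 * n + 2)) (h : i.1 < 2 * n + 1) :
    τ.extendDomain (eL n) i =
      ⟨(τ ⟨i.1, h⟩).1, by have := (τ ⟨i.1, h⟩).isLt; omega⟩ :=
  Equiv.Perm.extendDomain_apply_subtype τ (eL n) h

lemma ext_apply_last (τ : Perm (Fin (2 * n + 1))) :
    τ.extendDomain (eL n) (lastF n) = lastF n :=
  Equiv.Perm.extendDomain_apply_not_subtype τ (eL n) (by simp [lastF])

lemma hp_of_fix {σ : Perm (Fin (2 * n + 2))} (hσ : σ (lastF n) = lastF n) :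
    ∀ x : Fin (2 * n + 2), x.1 < 2 * n + 1 ↔ (σ x).1 < 2 * n + 1 := by
  intro x
  have h1 : ∀ y : Fin (2 * n + 2), y.1 < 2 * n + 1 ↔ y ≠ lastF n := by
    intro y
    constructor
    · intro h he; rw [he] at h; simp [lastF] at h
    · intro h
      have h2 := y.isLt
      rcases Nat.lt_or_ge y.1 (2 * n + 1) with h' | h'
      · exact h'
      · exact absurd (Fin.ext (by simp only [lastF]; omega)) h
  rw [h1, h1]
  constructor
  · intro h he; exact h (σ.injective (he.trans hσ.symm))
  · intro h he; exact h (he ▸ hσ)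

noncomputable def res (σ : Perm (Fin (2 * n + 2))) (hσ : σ (lastF n) = lastF n) :
    Perm (Fin (2 * n + 1)) :=
  (eL n).symm.permCongr (σ.subtypePerm (fun x => (hp_of_fix hσ x).symm))

lemma res_apply (σ : Perm (Fin (2 * n + 2))) (hσ : σ (lastF n) = lastF n)
    (i : Fin (2 * n + 1)) :
    res σ hσ i = ⟨(σ ⟨i.1, by have := i.isLt; omega⟩).1,
      ((hp_of_fix hσ ⟨i.1, by have := i.isLt; omega⟩).1 i.isLt)⟩ :=
  rfl

lemma ext_res (σ : Perm (Fin (2 * n + 2))) (hσ : σ (lastF n) = lastF n) :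
    (res σ hσ).extendDomain (eL n) = σ := by
  apply Equiv.ext
  intro x
  by_cases hx : x.1 < 2 * n + 1
  · exact (ext_apply_lt _ x hx).trans rfl
  · have hxl : x = lastF n := Fin.ext (by have := x.isLt; simp only [lastF]; omega)
    rw [hxl, ext_apply_last]
    exact hσ.symm

lemma res_ext (τ : Perm (Fin (2 * n + 1))) :
    res (τ.extendDomain (eL n)) (ext_apply_last τ) = τ := by
  apply Equiv.ext
  intro i
  apply Fin.val_injective
  show (τ.extendDomain (eL n) ⟨i.1, by have := i.isLt; omega⟩).1 = (τ i).1
  exact congrArg Fin.val (ext_apply_lt τ ⟨i.1, by have := i.isLt; omega⟩ i.isLt)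

lemma bb_lt_lt (x : Fin (2 * n + 1) → ℝ) (i j : Fin (2 * n + 2))
    (hi : i.1 < 2 * n + 1) (hj : j.1 < 2 * n + 1) :
    bb n a R x i j = a x ⟨i.1, hi⟩ ⟨j.1, hj⟩ := by
  unfold bb; rw [dif_pos hi, dif_pos hj]

lemma bb_lt_last (x : Fin (2 * n + 1) → ℝ) (i : Fin (2 * n + 2)) (hi : i.1 < 2 * n + 1) :
    bb n a R x i (lastF n) = -R x ⟨i.1, hi⟩ := by
  unfold bb
  rw [dif_pos hi, dif_neg (by simp [lastF])]

lemma ff_ext (x : Fin (2 * n + 1) → ℝ) (τ : Perm (Fin (2 * n + 1))) :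
    ff n a R x (τ.extendDomain (eL n)) =
      -(((Equiv.Perm.sign τ : ℤ) : ℝ) *
        (∏ i : Fin n, a x (τ ⟨2 * i.1, by have := i.isLt; omega⟩)
          (τ ⟨2 * i.1 + 1, by have := i.isLt; omega⟩)) *
        R x (τ ⟨2 * n, by omega⟩)) := by
  unfold ff
  rw [Equiv.Perm.sign_extendDomain, Fin.prod_univ_castSucc]
  have hlastpair : bb n a R x (τ.extendDomain (eL n) (e₀ n (Fin.last n)))
      (τ.extendDomain (eL n) (e₁ n (Fin.last n))) = -R x (τ ⟨2 * n, by omega⟩) := by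
    have h0 : τ.extendDomain (eL n) (e₀ n (Fin.last n)) =
        ⟨(τ ⟨2 * n, by omega⟩).1, by have := (τ ⟨2 * n, by omega⟩).isLt; omega⟩ :=
      ext_apply_lt τ (e₀ n (Fin.last n)) (by show 2 * n < 2 * n + 1; omega)
    have h1 : τ.extendDomain (eL n) (e₁ n (Fin.last n)) = lastF n := ext_apply_last τ
    rw [h0, h1, bb_lt_last]
  have hmid : ∀ i : Fin n,
      bb n a R x (τ.extendDomain (eL n) (e₀ n i.castSucc))
        (τ.extendDomain (eL n) (e₁ n i.castSucc)) =
      a x (τ ⟨2 * i.1, by have := i.isLt; omega⟩)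
        (τ ⟨2 * i.1 + 1, by have := i.isLt; omega⟩) := by
    intro i
    have hlt := i.isLt
    have h0 : τ.extendDomain (eL n) (e₀ n i.castSucc) =
        ⟨(τ ⟨2 * i.1, by omega⟩).1, by have := (τ ⟨2 * i.1, by omega⟩).isLt; omega⟩ :=
      ext_apply_lt τ (e₀ n i.castSucc) (by show 2 * i.1 < 2 * n + 1; omega)
    have h1 : τ.extendDomain (eL n) (e₁ n i.castSucc) =
        ⟨(τ ⟨2 * i.1 + 1, by omega⟩).1,
          by have := (τ ⟨2 * i.1 + 1, by omega⟩).isLt; omega⟩ :=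
      ext_apply_lt τ (e₁ n i.castSucc) (by show 2 * i.1 + 1 < 2 * n + 1; omega)
    rw [h0, h1, bb_lt_lt]
  rw [hlastpair, Finset.prod_congr rfl (fun i _ => hmid i)]
  ring

lemma sum_last (x : Fin (2 * n + 1) → ℝ) :
    ∑ σ ∈ univ.filter (fun σ : Perm (Fin (2 * n + 2)) => σ (lastF n) = lastF n),
      ff n a R x σ =
    -∑ τ : Perm (Fin (2 * n + 1)),
      ((Equiv.Perm.sign τ : ℤ) : ℝ) *
        (∏ i : Fin n, a x (τ ⟨2 * i.1, by have := i.isLt; omega⟩)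
          (τ ⟨2 * i.1 + 1, by have := i.isLt; omega⟩)) *
        R x (τ ⟨2 * n, by omega⟩) := by
  rw [← Finset.sum_neg_distrib]
  refine Finset.sum_bij' (fun σ hσ => res σ (by simpa using hσ))
    (fun τ _ => τ.extendDomain (eL n)) ?_ ?_ ?_ ?_ ?_
  · intro σ hσ; exact mem_univ _
  · intro τ _
    simp only [mem_filter, mem_univ, true_and]
    exact ext_apply_last τ
  · intro σ hσ; exact ext_res σ (by simpa using hσ)
  · intro τ _; exact res_ext τ
  · intro σ hσ
    have hfix : σ (lastF n) = lastF n := by simpa using hσ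
    have h := ff_ext (a := a) (R := R) x (res σ hfix)
    rw [ext_res σ hfix] at h
    exact h.symm ▸ (by rw [← h])
end Stmt10Aux

namespace Stmt10Aux

variable {n : ℕ}
  {a : (Fin (2 * n + 1) → ℝ) → Fin (2 * n + 1) → Fin (2 * n + 1) → ℝ}
  {R : (Fin (2 * n + 1) → ℝ) → Fin (2 * n + 1) → ℝ}

lemma piComp_eq (z : (Fin (2 * n + 1) → ℝ) × ℝ) (i j : Fin (2 * n + 2)) :
    piComp n a R z i j = Real.exp (-z.2) * bb n a R z.1 i j := by
  unfold piComp bb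
  split_ifs <;> ring

lemma cPi_eq (hanti : ∀ p i j, a p i j = -a p j i) (z : (Fin (2 * n + 1) → ℝ) × ℝ) :
    cPi n a R z =
      (-((n : ℝ) + 1)) * Real.exp (-((n : ℝ) + 1) * z.2) * cLam n a R z.1 := by
  have hterm : ∀ σ : Perm (Fin (2 * n + 2)),
      ((Equiv.Perm.sign σ : ℤ) : ℝ) *
        ∏ i : Fin (n + 1), piComp n a R z (σ ⟨2 * i.1, by have := i.isLt; omega⟩)
          (σ ⟨2 * i.1 + 1, by have := i.isLt; omega⟩) =
      Real.exp (-((n : ℝ) + 1) * z.2) * ff n a R z.1 σ := by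
    intro σ
    have hp : ∏ i : Fin (n + 1), piComp n a R z (σ ⟨2 * i.1, by have := i.isLt; omega⟩)
          (σ ⟨2 * i.1 + 1, by have := i.isLt; omega⟩) =
        ∏ i : Fin (n + 1), (Real.exp (-z.2) * bb n a R z.1 (σ (e₀ n i)) (σ (e₁ n i))) :=
      Finset.prod_congr rfl fun i _ => piComp_eq z _ _
    rw [hp, Finset.prod_mul_distrib, Finset.prod_const, card_univ, Fintype.card_fin]
    have hexp : Real.exp (-z.2) ^ (n + 1) = Real.exp (-((n : ℝ) + 1) * z.2) := by
      rw [← Real.exp_nat_mul]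
      congr 1
      push_cast
      ring
    rw [hexp]
    unfold ff
    ring
  unfold cPi
  rw [Finset.sum_congr rfl fun σ _ => hterm σ, ← Finset.mul_sum, sum_ff_eq hanti z.1,
    sum_last z.1]
  unfold cLam
  have h2 : (2 : ℝ) ^ n ≠ 0 := by positivity
  field_simp
  ring

lemma cLam_contDiff (hΛ : ContDiff ℝ (⊤ : ℕ∞) a) (hR : ContDiff ℝ (⊤ : ℕ∞) R) :
    ContDiff ℝ (⊤ : ℕ∞) (cLam n a R) := by
  unfold cLam
  refine contDiff_const.mul (ContDiff.sum fun σ _ => ?_)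
  refine ContDiff.mul (contDiff_const.mul (contDiff_prod fun i _ => ?_)) ?_
  · exact contDiff_pi.1 (contDiff_pi.1 hΛ _) _
  · exact contDiff_pi.1 hR _

end Stmt10Aux

/-- Let `(ℝ^{2n+1}, Λ, R)` be a Jacobi manifold and `Π = e^{-τ}(Λ + ∂/∂τ ∧ R)` its
Poissonization on `ℝ^{2n+1} × ℝ`.  Then `Π^{n+1} = -(n+1) e^{-(n+1)τ} ∂/∂τ ∧ Λⁿ ∧ R`
up to a nonzero combinatorial constant; consequently, if `Λⁿ ∧ R` is transverse to the
zero section of `Λ^{2n+1}(Tℝ^{2n+1})`, then `Π^{n+1}` is transverse to the zero section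
of `Λ^{2n+2}(T(ℝ^{2n+1} × ℝ))`: the Poissonization of a b-Jacobi manifold is b-Poisson. -/
theorem stmt10 (n : ℕ)
    (a : (Fin (2 * n + 1) → ℝ) → Fin (2 * n + 1) → Fin (2 * n + 1) → ℝ)
    (R : (Fin (2 * n + 1) → ℝ) → Fin (2 * n + 1) → ℝ)
    (hΛ : ContDiff ℝ (⊤ : ℕ∞) a) (hR : ContDiff ℝ (⊤ : ℕ∞) R)
    (hanti : ∀ p i j, a p i j = -a p j i)
    (hJac : ∀ f g h : (Fin (2 * n + 1) → ℝ) → ℝ,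
      ContDiff ℝ (⊤ : ℕ∞) f → ContDiff ℝ (⊤ : ℕ∞) g → ContDiff ℝ (⊤ : ℕ∞) h →
      ∀ p, lamBr (2 * n + 1) a f (lamBr (2 * n + 1) a g h) p +
          lamBr (2 * n + 1) a g (lamBr (2 * n + 1) a h f) p +
          lamBr (2 * n + 1) a h (lamBr (2 * n + 1) a f g) p =
        vfD (2 * n + 1) R f p * lamBr (2 * n + 1) a g h p -
          vfD (2 * n + 1) R g p * lamBr (2 * n + 1) a f h p +
          vfD (2 * n + 1) R h p * lamBr (2 * n + 1) a f g p)
    (hLR : ∀ f g : (Fin (2 * n + 1) → ℝ) → ℝ, ContDiff ℝ (⊤ : ℕ∞) f → ContDiff ℝ (⊤ : ℕ∞) g →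
      ∀ p, vfD (2 * n + 1) R (lamBr (2 * n + 1) a f g) p =
        lamBr (2 * n + 1) a (vfD (2 * n + 1) R f) g p +
          lamBr (2 * n + 1) a f (vfD (2 * n + 1) R g) p) :
    (∃ k : ℝ, k ≠ 0 ∧ ∀ z : (Fin (2 * n + 1) → ℝ) × ℝ,
      cPi n a R z = k * Real.exp (-((n : ℝ) + 1) * z.2) * cLam n a R z.1) ∧
    ((∀ p, cLam n a R p = 0 → fderiv ℝ (cLam n a R) p ≠ 0) →
      ∀ z, cPi n a R z = 0 → fderiv ℝ (cPi n a R) z ≠ 0) := by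
  have hk : (-((n : ℝ) + 1)) ≠ 0 := by
    have : (0 : ℝ) < (n : ℝ) + 1 := by positivity
    intro h; nlinarith
  have hid := fun z => Stmt10Aux.cPi_eq (a := a) (R := R) hanti z
  refine ⟨⟨-((n : ℝ) + 1), hk, hid⟩, ?_⟩
  intro hT z hz
  have hcl : ContDiff ℝ (⊤ : ℕ∞) (cLam n a R) := Stmt10Aux.cLam_contDiff hΛ hR
  set k : ℝ := -((n : ℝ) + 1) with hkdef
  have hfun : cPi n a R =
      fun w : (Fin (2 * n + 1) → ℝ) × ℝ =>
        k * Real.exp (-((n : ℝ) + 1) * w.2) * cLam n a R w.1 := funext hid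
  have hexpne : k * Real.exp (-((n : ℝ) + 1) * z.2) ≠ 0 :=
    mul_ne_zero hk (Real.exp_ne_zero _)
  have hclz : cLam n a R z.1 = 0 := by
    by_contra hne
    exact (mul_ne_zero hexpne hne) ((hid z).symm.trans hz)
  have hG : ContDiff ℝ (⊤ : ℕ∞) (cPi n a R) := by
    rw [hfun]
    exact (contDiff_const.mul (Real.contDiff_exp.comp
      (contDiff_const.mul contDiff_snd))).mul (hcl.comp contDiff_fst)
  intro hbad
  have hι : HasFDerivAt (fun v : Fin (2 * n + 1) → ℝ => (v, z.2))
      ((ContinuousLinearMap.id ℝ (Fin (2 * n + 1) → ℝ)).prod 0) z.1 :=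
    HasFDerivAt.prodMk (hasFDerivAt_id z.1) (hasFDerivAt_const z.2 z.1)
  have hGz : HasFDerivAt (cPi n a R) (fderiv ℝ (cPi n a R) z)
      ((fun v : Fin (2 * n + 1) → ℝ => (v, z.2)) z.1) :=
    (hG.differentiable (by simp) z).hasFDerivAt
  have hcomp := hGz.comp z.1 hι
  have hC : HasFDerivAt
      (fun v => (k * Real.exp (-((n : ℝ) + 1) * z.2)) * cLam n a R v)
      ((k * Real.exp (-((n : ℝ) + 1) * z.2)) • fderiv ℝ (cLam n a R) z.1) z.1 :=
    ((hcl.differentiable (by simp) z.1).hasFDerivAt).const_mul _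
  have hcomp' : HasFDerivAt
      (fun v => (k * Real.exp (-((n : ℝ) + 1) * z.2)) * cLam n a R v)
      ((fderiv ℝ (cPi n a R) z).comp
        ((ContinuousLinearMap.id ℝ (Fin (2 * n + 1) → ℝ)).prod 0)) z.1 := by
    have heq : (cPi n a R ∘ fun v : Fin (2 * n + 1) → ℝ => (v, z.2)) =
        fun v => (k * Real.exp (-((n : ℝ) + 1) * z.2)) * cLam n a R v := by
      funext v
      rw [Function.comp_apply, hid (v, z.2)]
    rw [← heq]
    exact hcomp
  have huniq := hcomp'.unique hC
  rw [hbad, ContinuousLinearMap.zero_comp] at huniq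
  rcases smul_eq_zero.mp huniq.symm with h | h
  · exact hexpne h
  · exact hT z.1 hclz h
end
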